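/- Let G be a Lie algebra and R : G → G a linear map satisfying [R(x),R(y)] = R([R(x),y] + [x,R(y)]) for all x,y ∈ G. Then x * y = [R(x), y] defines a left-symmetric algebra structure on G. -/

import Mathlib

section CYBEOperator

variable {G : Type*} [LieRing G]

/-- The Yang–Baxter identity says exactly that `R` turns the commutator of the product
`x * y = ⁅R x, y⁆` into the bracket of the images. -/
theorem sub_eq_lie_of_cybe (R : G →+ G) (hR : ∀ x y : G, ⁅R x, R y⁆ = R (⁅R x, y⁆ + ⁅x, R y⁆))
    (x y : G) : R ⁅R x, y⁆ - R ⁅R y, x⁆ = ⁅R x, R y⁆ := by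
  rw [hR, map_add, ← lie_skew (R y) x, map_neg, sub_neg_eq_add]

theorem lie_sub_lie_eq_lie_sub_lie_of_cybe (R : G →+ G)
    (hR : ∀ x y : G, ⁅R x, R y⁆ = R (⁅R x, y⁆ + ⁅x, R y⁆)) (x y z : G) :
    ⁅R ⁅R x, y⁆, z⁆ - ⁅R x, ⁅R y, z⁆⁆ = ⁅R ⁅R y, x⁆, z⁆ - ⁅R y, ⁅R x, z⁆⁆ := by
  have h : ⁅R ⁅R x, y⁆, z⁆ - ⁅R ⁅R y, x⁆, z⁆ = ⁅R x, ⁅R y, z⁆⁆ - ⁅R y, ⁅R x, z⁆⁆ := by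
    rw [← sub_lie, sub_eq_lie_of_cybe R hR, lie_lie]
  rw [sub_eq_sub_iff_sub_eq_sub, h]

end CYBEOperator

theorem lsym_from_cybe_operator (F : Type*) [Field F] (G : Type*) [LieRing G] [LieAlgebra F G]
    (R : G →ₗ[F] G)
    (hR : ∀ x y : G, ⁅R x, R y⁆ = R (⁅R x, y⁆ + ⁅x, R y⁆)) :
    ∀ x y z : G,
      ⁅R ⁅R x, y⁆, z⁆ - ⁅R x, ⁅R y, z⁆⁆ = ⁅R ⁅R y, x⁆, z⁆ - ⁅R y, ⁅R x, z⁆⁆ :=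
  lie_sub_lie_eq_lie_sub_lie_of_cybe R.toAddMonoidHom hR
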